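/- arXiv:1112.6168 — 3 statements merged into one kernel-verified Lean document; each statement's English description precedes it below -/
import Mathlib

section
/- For any homogeneous polynomial G of degree d in the Plücker variables, Δ(G·Q) = (d+3)·G + Q·Δ(G). -/
open MvPolynomial

/- Variable convention: `0 ↔ p₀₁, 1 ↔ p₀₂, 2 ↔ p₀₃, 3 ↔ p₁₂, 4 ↔ p₁₃, 5 ↔ p₂₃`. -/

/-- The Plücker quadric (Pfaffian) `Q = p₀₁p₂₃ − p₀₂p₁₃ + p₀₃p₁₂`. -/
noncomputable def Qp : MvPolynomial (Fin 6) ℂ := X 0 * X 5 - X 1 * X 4 + X 2 * X 3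

/-- The Laplace operator `Δ = ∂²/∂p₀₁∂p₂₃ − ∂²/∂p₀₂∂p₁₃ + ∂²/∂p₀₃∂p₁₂`. -/
noncomputable def lap (F : MvPolynomial (Fin 6) ℂ) : MvPolynomial (Fin 6) ℂ :=
  pderiv 5 (pderiv 0 F) - pderiv 4 (pderiv 1 F) + pderiv 3 (pderiv 2 F)

/-- The Cayley bracket `{F,G} = ⟨∇F, ∇G⟩`, the symmetric pairing of gradients
via the Pfaffian form. -/
noncomputable def cbrk (F G : MvPolynomial (Fin 6) ℂ) : MvPolynomial (Fin 6) ℂ :=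
  pderiv 0 F * pderiv 5 G + pderiv 5 F * pderiv 0 G
  - pderiv 1 F * pderiv 4 G - pderiv 4 F * pderiv 1 G
  + pderiv 2 F * pderiv 3 G + pderiv 3 F * pderiv 2 G

lemma X_mul_pderiv_monomial (i : Fin 6) (m : Fin 6 →₀ ℕ) (c : ℂ) :
    X i * pderiv i (monomial m c) = monomial m (c * m i) := by
  rw [pderiv_monomial, X, monomial_mul, one_mul]
  rcases Nat.eq_zero_or_pos (m i) with h | h
  · simp [h]
  · have hm : (Finsupp.single i 1) + (m - Finsupp.single i 1) = m := by
      ext j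
      rcases eq_or_ne j i with rfl | hj
      · simp [Nat.add_sub_cancel' h]
      · simp [Finsupp.single_apply, Ne.symm hj]
    rw [hm]

lemma pderiv_X' (i j : Fin 6) :
    pderiv i (X j : MvPolynomial (Fin 6) ℂ) = if j = i then 1 else 0 := by
  rcases eq_or_ne j i with rfl | h
  · simp [pderiv_X_self]
  · simp [pderiv_X_of_ne h, h]

lemma euler (d : ℕ) (G : MvPolynomial (Fin 6) ℂ) (hG : G.IsHomogeneous d) :
    ∑ i : Fin 6, X i * pderiv i G = C (d : ℂ) * G := by
  conv_lhs => rw [G.as_sum]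
  conv_rhs => rw [G.as_sum]
  simp only [map_sum, Finset.mul_sum]
  rw [Finset.sum_comm]
  refine Finset.sum_congr rfl fun m hm => ?_
  simp only [X_mul_pderiv_monomial, ← map_sum, C_mul_monomial]
  congr 1
  have hd : (Finsupp.weight 1) m = d := hG (mem_support_iff.mp hm)
  have : ∑ i : Fin 6, (m i : ℂ) = (d : ℂ) := by
    rw [← hd]
    simp [Finsupp.weight_apply, Finsupp.sum_fintype]
  rw [← Finset.mul_sum, this, mul_comm]

lemma lap_mul (F G : MvPolynomial (Fin 6) ℂ) :
    lap (F * G) = lap F * G + cbrk F G + F * lap G := by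
  simp only [lap, cbrk, pderiv_mul, map_add, map_sub, map_mul]
  ring

/-- for `G` homogeneous of degree `d`,
`Δ(G·Q) = (d+3)·G + Q·Δ(G)`. -/
theorem stmt6 (d : ℕ) (G : MvPolynomial (Fin 6) ℂ) (hG : G.IsHomogeneous d) :
    lap (G * Qp) = C ((d : ℂ) + 3) * G + Qp * lap G := by
  have h1 : lap Qp = C 3 := by
    have : (C 3 : MvPolynomial (Fin 6) ℂ) = 1 + 1 + 1 := by
      rw [show (3:ℂ) = 1+1+1 by norm_num]; simp [map_add]
    rw [this]
    simp [lap, Qp, pderiv_X_self, pderiv_X_of_ne]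
  have h2 : cbrk G Qp = C (d : ℂ) * G := by
    rw [← euler d G hG]
    simp only [cbrk, Qp, map_sub, map_add, pderiv_mul, pderiv_X', Fin.sum_univ_six,
      show ((0:Fin 6) = 5) = False by simp, show ((1:Fin 6) = 5) = False by simp,
      show ((2:Fin 6) = 5) = False by simp, show ((3:Fin 6) = 5) = False by simp,
      show ((4:Fin 6) = 5) = False by simp, show ((5:Fin 6) = 0) = False by simp,
      show ((4:Fin 6) = 0) = False by simp, show ((3:Fin 6) = 0) = False by simp,
      show ((2:Fin 6) = 0) = False by simp, show ((1:Fin 6) = 0) = False by simp,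
      show ((0:Fin 6) = 4) = False by simp, show ((5:Fin 6) = 4) = False by simp,
      show ((1:Fin 6) = 4) = False by simp, show ((2:Fin 6) = 4) = False by simp,
      show ((3:Fin 6) = 4) = False by simp, show ((5:Fin 6) = 1) = False by simp,
      show ((4:Fin 6) = 1) = False by simp, show ((2:Fin 6) = 1) = False by simp,
      show ((3:Fin 6) = 1) = False by simp, show ((0:Fin 6) = 3) = False by simp,
      show ((5:Fin 6) = 3) = False by simp, show ((1:Fin 6) = 3) = False by simp,
      show ((4:Fin 6) = 3) = False by simp, show ((2:Fin 6) = 3) = False by simp,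
      show ((0:Fin 6) = 2) = False by simp, show ((5:Fin 6) = 2) = False by simp,
      show ((1:Fin 6) = 2) = False by simp, show ((4:Fin 6) = 2) = False by simp,
      show ((3:Fin 6) = 2) = False by simp, show ((0:Fin 6) = 1) = False by simp,
      if_false, if_true, mul_zero, zero_mul, mul_ite, ite_mul, add_zero, zero_add, sub_zero,
      neg_zero, zero_sub]
    ring
  rw [lap_mul, h1, h2]
  rw [show ((d : ℂ) + 3) = (d : ℂ) + 3 from rfl, map_add]
  ring
end

section
/- For the tangential Cayley form F := (p₀₁ + p₂₃)² + 4p₀₃p₁₂ of the smooth quadric surface {x₀x₁ − x₂x₃ = 0} ⊂ ℙ³, one has {F,F} = 8F, and the polynomial F₂ := F − 2Q satisfies {F₂,F₂} = 8Q and Δ(F₂) = 0. -/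
open MvPolynomial

/-- for the tangential Cayley form `F = (p₀₁ + p₂₃)² + 4p₀₃p₁₂` of the
smooth quadric `{x₀x₁ − x₂x₃ = 0} ⊂ ℙ³`, one has `{F,F} = 8F`, and
`F₂ := F − 2Q` satisfies `{F₂,F₂} = 8Q` and `Δ(F₂) = 0`. -/
theorem stmt12 :
    let F : MvPolynomial (Fin 6) ℂ := (X 0 + X 5) ^ 2 + 4 * X 2 * X 3
    let F₂ : MvPolynomial (Fin 6) ℂ := F - 2 * Qp
    cbrk F F = 8 * F ∧ cbrk F₂ F₂ = 8 * Qp ∧ lap F₂ = 0 := by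
  intro F F₂
  have h4 : ∀ i : Fin 6, pderiv i (4 : MvPolynomial (Fin 6) ℂ) = 0 := fun i => by
    rw [show (4 : MvPolynomial (Fin 6) ℂ) = C 4 from (map_ofNat _ _).symm, pderiv_C]
  have h2 : ∀ i : Fin 6, pderiv i (2 : MvPolynomial (Fin 6) ℂ) = 0 := fun i => by
    rw [show (2 : MvPolynomial (Fin 6) ℂ) = C 2 from (map_ofNat _ _).symm, pderiv_C]
  have dF0 : pderiv 0 F = 2 * (X 0 + X 5) := by
    simp [F, pderiv_mul, h4, Derivation.leibniz_pow, pderiv_X, Pi.single_apply]; ring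
  have dF1 : pderiv 1 F = 0 := by
    simp [F, pderiv_mul, h4, Derivation.leibniz_pow, pderiv_X, Pi.single_apply]
  have dF2 : pderiv 2 F = 4 * X 3 := by
    simp [F, pderiv_mul, h4, Derivation.leibniz_pow, pderiv_X, Pi.single_apply]; ring
  have dF3 : pderiv 3 F = 4 * X 2 := by
    simp [F, pderiv_mul, h4, Derivation.leibniz_pow, pderiv_X, Pi.single_apply]
  have dF4 : pderiv 4 F = 0 := by
    simp [F, pderiv_mul, h4, Derivation.leibniz_pow, pderiv_X, Pi.single_apply]
  have dF5 : pderiv 5 F = 2 * (X 0 + X 5) := by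
    simp [F, pderiv_mul, h4, Derivation.leibniz_pow, pderiv_X, Pi.single_apply]; ring
  have dQ0 : pderiv 0 Qp = X 5 := by simp [Qp, pderiv_mul, pderiv_X, Pi.single_apply]
  have dQ1 : pderiv 1 Qp = -X 4 := by simp [Qp, pderiv_mul, pderiv_X, Pi.single_apply]
  have dQ2 : pderiv 2 Qp = X 3 := by simp [Qp, pderiv_mul, pderiv_X, Pi.single_apply]
  have dQ3 : pderiv 3 Qp = X 2 := by simp [Qp, pderiv_mul, pderiv_X, Pi.single_apply]
  have dQ4 : pderiv 4 Qp = -X 1 := by simp [Qp, pderiv_mul, pderiv_X, Pi.single_apply]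
  have dQ5 : pderiv 5 Qp = X 0 := by simp [Qp, pderiv_mul, pderiv_X, Pi.single_apply]
  have e0 : pderiv 0 F₂ = 2 * X 0 := by
    simp only [F₂, map_sub, pderiv_mul, h2, dF0, dQ0, zero_mul, zero_add]; ring
  have e1 : pderiv 1 F₂ = 2 * X 4 := by
    simp only [F₂, map_sub, pderiv_mul, h2, dF1, dQ1, zero_mul, zero_add]; ring
  have e2 : pderiv 2 F₂ = 2 * X 3 := by
    simp only [F₂, map_sub, pderiv_mul, h2, dF2, dQ2, zero_mul, zero_add]; ring
  have e3 : pderiv 3 F₂ = 2 * X 2 := by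
    simp only [F₂, map_sub, pderiv_mul, h2, dF3, dQ3, zero_mul, zero_add]; ring
  have e4 : pderiv 4 F₂ = 2 * X 1 := by
    simp only [F₂, map_sub, pderiv_mul, h2, dF4, dQ4, zero_mul, zero_add]; ring
  have e5 : pderiv 5 F₂ = 2 * X 5 := by
    simp only [F₂, map_sub, pderiv_mul, h2, dF5, dQ5, zero_mul, zero_add]; ring
  refine ⟨?_, ?_, ?_⟩
  · rw [cbrk, dF0, dF1, dF2, dF3, dF4, dF5]
    show _ = 8 * ((X 0 + X 5) ^ 2 + 4 * X 2 * X 3)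
    ring
  · rw [cbrk, e0, e1, e2, e3, e4, e5, Qp]
    ring
  · rw [lap, e0, e1, e2]
    simp [pderiv_mul, h2, pderiv_X, Pi.single_apply]
end

section
/- Let Z ⊂ Q be a projective subvariety of the smooth quadric hypersurface Q ⊂ ℙ⁵ (identified with its dual via the nondegenerate quadratic form). Then: (1) Z ⊆ Z^∨, where Z^∨ is the projective dual variety of Z under this identification; and (2) Z^∨ ⊆ Q if and only if Z = Z^∨. -/
noncomputable section

/-- The (cone over the) projective dual variety of a cone `Z ⊆ ℂ⁶`, with respect to the
identification of `ℙ⁵` with its dual space given by a bilinear form `B`: the closure of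
the set of points `w` such that the hyperplane `w^⊥` contains the tangent cone of `Z`
at some nonzero point of `Z`. -/
def dualVariety (B : LinearMap.BilinForm ℂ (Fin 6 → ℂ)) (Z : Set (Fin 6 → ℂ)) :
    Set (Fin 6 → ℂ) :=
  closure {w | ∃ v ∈ Z, v ≠ 0 ∧ ∀ u ∈ tangentConeAt ℂ Z v, B u w = 0}

open Set

section TangentCone

variable {𝕜 E F : Type*} [NontriviallyNormedField 𝕜] [NormedAddCommGroup E] [NormedSpace 𝕜 E]
  [NormedAddCommGroup F] [NormedSpace 𝕜 F]

theorem HasFDerivWithinAt.apply_eq_zero_of_mem_tangentConeAt {f : E → F} {f' : E →L[𝕜] F}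
    {s : Set E} {x u : E} (hf : HasFDerivWithinAt f f' s x) (hx : x ∈ s)
    (hs : ∀ y ∈ s, f y = 0) (hu : u ∈ tangentConeAt 𝕜 s x) : f' u = 0 := by
  have himage : f '' s ⊆ {0} := by rintro _ ⟨y, hy, rfl⟩; exact hs y hy
  have hcone := tangentConeAt_mono himage (hf.mapsTo_tangent_cone hu)
  rw [hs x hx] at hcone
  refine tangentConeAt_subset_zero (fun hacc => ?_) hcone
  obtain ⟨y, ⟨-, hy⟩, hy0⟩ := accPt_iff_nhds.mp hacc univ Filter.univ_mem
  exact hy0 hy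

theorem LinearMap.BilinForm.apply_add_apply_eq_zero_of_mem_tangentConeAt [CompleteSpace 𝕜]
    [FiniteDimensional 𝕜 E] (B : LinearMap.BilinForm 𝕜 E) {s : Set E}
    (hs : s ⊆ {v | B v v = 0}) {x u : E} (hx : x ∈ s) (hu : u ∈ tangentConeAt 𝕜 s x) :
    B x u + B u x = 0 := by
  have hderiv := B.toContinuousBilinearMap.hasFDerivAt_of_bilinear (hasFDerivAt_id x)
    (hasFDerivAt_id x)
  simpa using hderiv.hasFDerivWithinAt.apply_eq_zero_of_mem_tangentConeAt hx hs hu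

end TangentCone

-- A point `x` of an isotropic cone is its own witness: every tangent vector at `x` is
-- `B`-orthogonal to `x`, the derivative of `v ↦ B v v` at `x` being `2 B(·, x)`.
theorem subset_dualVariety {B : LinearMap.BilinForm ℂ (Fin 6 → ℂ)}
    (hsymm : ∀ v w, B v w = B w v) {S : Set (Fin 6 → ℂ)} (hSQ : S ⊆ {v | B v v = 0})
    (hSne : ∃ v ∈ S, v ≠ 0) : S ⊆ dualVariety B S := by
  intro x hx
  apply subset_closure
  by_cases hx0 : x = 0
  · obtain ⟨v, hv, hv0⟩ := hSne
    exact ⟨v, hv, hv0, fun u _ => by simp [hx0]⟩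
  · refine ⟨x, hx, hx0, fun u hu => ?_⟩
    have h := B.apply_add_apply_eq_zero_of_mem_tangentConeAt hSQ hx hu
    rwa [hsymm x u, add_self_eq_zero] at h

theorem stmt19_general (B : LinearMap.BilinForm ℂ (Fin 6 → ℂ))
    (hsymm : ∀ v w, B v w = B w v)
    (Z : Set (Fin 6 → ℂ))
    (hZne : ∃ v ∈ Z, v ≠ 0)
    (hZQ : Z ⊆ {v | B v v = 0})
    (hbidual : dualVariety B (dualVariety B Z) = Z) :
    Z ⊆ dualVariety B Z ∧
      (dualVariety B Z ⊆ {v | B v v = 0} ↔ Z = dualVariety B Z) := by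
  have hZdual : Z ⊆ dualVariety B Z := subset_dualVariety hsymm hZQ hZne
  refine ⟨hZdual, fun hdualQ => hZdual.antisymm ?_, fun h => h ▸ hZQ⟩
  obtain ⟨v, hv, hv0⟩ := hZne
  have := subset_dualVariety hsymm hdualQ ⟨v, hZdual hv, hv0⟩
  rwa [hbidual] at this

/-- let `Q ⊂ ℙ⁵` be the smooth quadric defined by a nondegenerate
symmetric bilinear form `B` (used to identify `ℙ⁵` with its dual), and let `Z ⊆ Q` be a
projective subvariety (a nonempty closed cone contained in the cone of `Q`), for which
biduality `(Z^∨)^∨ = Z` holds. Then (1) `Z ⊆ Z^∨`, and (2) `Z^∨ ⊆ Q ↔ Z = Z^∨`. -/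
theorem stmt19 (B : LinearMap.BilinForm ℂ (Fin 6 → ℂ))
    (hsymm : ∀ v w, B v w = B w v)
    (hnondeg : ∀ v, (∀ w, B v w = 0) → v = 0)
    (Z : Set (Fin 6 → ℂ))
    (hZcone : ∀ (c : ℂ), ∀ v ∈ Z, c • v ∈ Z)
    (hZclosed : IsClosed Z)
    (hZne : ∃ v ∈ Z, v ≠ 0)
    (hZQ : Z ⊆ {v | B v v = 0})
    (hbidual : dualVariety B (dualVariety B Z) = Z) :
    Z ⊆ dualVariety B Z ∧
      (dualVariety B Z ⊆ {v | B v v = 0} ↔ Z = dualVariety B Z) :=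
  stmt19_general B hsymm Z hZne hZQ hbidual

end
end
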